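/- Define Dψ : [0,1] → ℝ by Dψ(x) = 2x for 0 ≤ x ≤ 1/4, Dψ(x) = 1 − 2x for 1/4 < x < 3/4, and Dψ(x) = 2x − 2 for 3/4 ≤ x ≤ 1, and define the bell opinion vector field on triples by F(o)ᵢ = Σ_{j≠i} Dψ(|o_i − o_j|)·sign(o_j − o_i), where a summand is 0 when o_i = o_j. Then for every a ∈ [0, 1/2], each of the three points (a, a, a + 1/2), (a, a + 1/2, a) and (a + 1/2, a, a) is a fixed point of F. -/
import Mathlib


/-- Derivative of the bell-shaped potential `ψ(x) = x²` on `[0,1/4]`,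
`ψ(x) = −(x−1/2)² + 1/8` on `(1/4,3/4)`, `ψ(x) = (x−1)²` on `[3/4,1]`. -/
noncomputable def Dpsi (x : ℝ) : ℝ :=
  if x ≤ 1/4 then 2 * x
  else if x < 3/4 then 1 - 2 * x
  else 2 * x - 2

/-- The bell opinion vector field on triples:
`F(o)ᵢ = Σ_{j≠i} Dψ(|o_i − o_j|)·sign(o_j − o_i)` (a summand vanishes when
`o_i = o_j` since `sign 0 = 0`). -/
noncomputable def bellField (o : Fin 3 → ℝ) : Fin 3 → ℝ :=
  fun i => ∑ j ∈ Finset.univ.erase i, Dpsi |o i - o j| * Real.sign (o j - o i)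

lemma Dpsi_half : Dpsi (1/2) = 0 := by norm_num [Dpsi]

lemma summand_zero (x y : ℝ) (h : x = y ∨ |x - y| = 1/2) :
    Dpsi |x - y| * Real.sign (y - x) = 0 := by
  rcases h with h | h
  · simp [h, Real.sign_zero]
  · rw [h, Dpsi_half, zero_mul]

lemma bellField_eq_zero (o : Fin 3 → ℝ)
    (h : ∀ i j, o i = o j ∨ |o i - o j| = 1/2) : bellField o = 0 := by
  funext i
  simp only [bellField, Pi.zero_apply]
  exact Finset.sum_eq_zero fun j _ => summand_zero _ _ (h i j)

/-- Remark: for every `a ∈ [0, 1/2]`, each of the three points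
`(a, a, a + 1/2)`, `(a, a + 1/2, a)` and `(a + 1/2, a, a)` is a fixed point of
the bell opinion vector field. -/
theorem bell_extra_fixed_points (a : ℝ) (ha : a ∈ Set.Icc (0 : ℝ) (1/2)) :
    bellField ![a, a, a + 1/2] = 0 ∧
    bellField ![a, a + 1/2, a] = 0 ∧
    bellField ![a + 1/2, a, a] = 0 := by
  refine ⟨?_, ?_, ?_⟩ <;>
    refine bellField_eq_zero _ fun i j => ?_ <;>
    fin_cases i <;> fin_cases j <;> simp
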